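/- Every minimal TDS with positive topological entropy is FK-sensitive. -/

import Mathlib

open Filter Topology MeasureTheory Set

namespace FKPaper

variable {X : Type*} [MetricSpace X]

/-- The maximal fit of an `(n,δ)`-match between the orbits of `x` and `z` under `T`:
the largest cardinality of the domain of an order-preserving bijection
`π : D → R`, with `D, R ⊆ {0,…,n-1}` and `dist (T^[i] x) (T^[π i] z) < δ` for `i ∈ D`. -/
noncomputable def maxFit (T : X → X) (δ : ℝ) (n : ℕ) (x z : X) : ℕ :=
  sSup {k : ℕ | ∃ i j : Fin k → ℕ, StrictMono i ∧ StrictMono j ∧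
    (∀ s, i s < n) ∧ (∀ s, j s < n) ∧ ∀ s, dist (T^[i s] x) (T^[j s] z) < δ}

/-- `f̄_{n,δ}(x,z) = 1 - (maximal fit of an (n,δ)-match of x and z)/n`. -/
noncomputable def fbarN (T : X → X) (δ : ℝ) (n : ℕ) (x z : X) : ℝ :=
  1 - (maxFit T δ n x z : ℝ) / n

/-- `f̄_δ(x,z) = limsup_{n→∞} f̄_{n,δ}(x,z)`. -/
noncomputable def fbar (T : X → X) (δ : ℝ) (x z : X) : ℝ :=
  Filter.limsup (fun n => fbarN T δ n x z) Filter.atTop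

/-- The Feldman–Katok pseudometric `ρ_FK(x,z) = inf {δ > 0 : f̄_δ(x,z) < δ}`. -/
noncomputable def rhoFK (T : X → X) (x z : X) : ℝ :=
  sInf {δ : ℝ | 0 < δ ∧ fbar T δ x z < δ}

/-- Minimality: every forward orbit is dense. -/
def IsMinimal (T : X → X) : Prop :=
  ∀ x : X, Dense {y : X | ∃ n : ℕ, T^[n] x = y}

/-- FK-sensitivity: some `ε > 0` works for every nonempty open set. -/
def FKSensitive (T : X → X) : Prop :=
  ∃ ε > 0, ∀ U : Set X, IsOpen U → U.Nonempty →
    ∃ x ∈ U, ∃ y ∈ U, ε < rhoFK T x y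

end FKPaper

open FKPaper Filter Topology MeasureTheory Set

/-! If `T` is not FK-sensitive, then for every `δ > 0` some nonempty open set `U` has FK-diameter
below `δ`. Fix `z ∈ U`: every `x ∈ U` eventually matches all but a `δ`-fraction of its length-`n`
orbit segment with that of `z`. By Baire this holds uniformly on an open set `O`, and by minimality
every point enters `O` within a bounded time `N`. Up to the entropy scale `β`, an orbit segment of
length `n` is then determined by its entry time into `O`, the match with `z`, and points of a
finite `β/2`-net at the `N` initial and the `δn` unmatched times. This leaves at most
`N · C(n, δn)² · K^(N + δn)` possibilities, whose exponential growth rate tends to `0` with `δ`,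
contradicting positive entropy. -/

lemma le_of_injective_of_forall_lt {m n : ℕ} {i : Fin m → ℕ} (hi : Function.Injective i)
    (hin : ∀ s, i s < n) : m ≤ n := by
  simpa using Fin.le_of_embedding ⟨fun s => (⟨i s, hin s⟩ : Fin n),
    fun s t hst => hi (congrArg Fin.val hst)⟩

lemma Nat.card_orderEmbedding_fin (m n : ℕ) : Nat.card (Fin m ↪o Fin n) = n.choose m := by
  rw [Nat.card_congr Set.powersetCard.ofFinEmbEquiv, Set.powersetCard.card, Nat.card_fin]

def finCompl {m n : ℕ} (i : Fin m ↪o Fin n) : Fin (n - m) ↪o Fin n :=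
  (Finset.univ.map i.toEmbedding)ᶜ.orderEmbOfFin (by simp [Finset.card_compl])

lemma range_finCompl {m n : ℕ} (i : Fin m ↪o Fin n) : range (finCompl i) = (range i)ᶜ := by
  ext p
  simp [finCompl, Finset.range_orderEmbOfFin]

lemma Nat.choose_le_exp_one_div_pow {δ : ℝ} (hδ : 0 < δ) {n r : ℕ} (hr : δ * n ≤ r) :
    (n.choose r : ℝ) ≤ (Real.exp 1 / δ) ^ r := by
  rcases r.eq_zero_or_pos with rfl | hr0
  · simp
  have hr0' : (0 : ℝ) < r := by exact_mod_cast hr0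
  calc (n.choose r : ℝ) ≤ n ^ r / r.factorial := Nat.choose_le_pow_div r n
    _ = (n / r) ^ r * (r ^ r / r.factorial) := by rw [div_pow]; field_simp
    _ ≤ (1 / δ) ^ r * Real.exp r := by
        have hnr : (n : ℝ) / r ≤ 1 / δ := by rw [div_le_div_iff₀ hr0' hδ]; linarith
        gcongr
        exact Real.pow_div_factorial_le_exp _ hr0'.le r
    _ = (Real.exp 1 / δ) ^ r := by rw [div_pow, div_pow, ← Real.exp_one_pow]; ring

lemma IsOpen.exists_isOpen_eventually_subset {Y : Type*} [TopologicalSpace Y] [BaireSpace Y]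
    {U : Set Y} (hU : IsOpen U) (hne : U.Nonempty) {V : ℕ → Set Y} (hV : ∀ n, IsClosed (V n))
    (hUV : ∀ x ∈ U, ∀ᶠ n in atTop, x ∈ V n) :
    ∃ O, IsOpen O ∧ O.Nonempty ∧ ∀ᶠ n in atTop, O ⊆ V n := by
  set W : ℕ → Set Y := fun m => (⋂ n ≥ m, V n) ∪ Uᶜ
  have hW : ∀ m, IsClosed (W m) := fun m =>
    (isClosed_biInter fun n _ => hV n).union hU.isClosed_compl
  have hWcover : ⋃ m, W m = univ := by
    refine eq_univ_of_forall fun x => ?_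
    by_cases hx : x ∈ U
    · obtain ⟨m, hm⟩ := (hUV x hx).exists_forall_of_atTop
      exact mem_iUnion.2 ⟨m, .inl (mem_iInter₂.2 hm)⟩
    · exact mem_iUnion.2 ⟨0, .inr hx⟩
  obtain ⟨x, hxU, hxW⟩ := (dense_iUnion_interior_of_closed hW hWcover).inter_open_nonempty U hU hne
  obtain ⟨m, hm⟩ := mem_iUnion.1 hxW
  refine ⟨interior (W m) ∩ U, isOpen_interior.inter hU, ⟨x, hm, hxU⟩, ?_⟩
  filter_upwards [eventually_ge_atTop m] with n hn y ⟨hyW, hyU⟩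
  rcases interior_subset hyW with hy | hy
  · exact mem_iInter₂.1 hy n hn
  · exact absurd hyU hy

lemma Dynamics.coverMincard_univ_le_natCard {Y Γ : Type*} [Finite Γ] {T : Y → Y}
    {U : SetRel Y Y} {n : ℕ} (P : Γ → Y → Prop) (hP : ∀ x, ∃ γ, P γ x)
    (hU : ∀ γ x y, P γ x → P γ y → (x, y) ∈ dynEntourage T U n) :
    coverMincard T univ U n ≤ Nat.card Γ := by
  classical
  choose code hcode using hP
  have : Fintype (range code) := Fintype.ofFinite _
  let rep : range code → Y := fun γ => γ.2.choose
  have hcover : IsDynCoverOf T univ U n (Finset.univ.image rep : Finset Y) := by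
    intro x _
    have hrep : code (rep ⟨code x, x, rfl⟩) = code x :=
      Exists.choose_spec (p := (code · = code x)) _
    refine ⟨rep ⟨code x, x, rfl⟩, by simp, hU (code x) x _ (hcode x) ?_⟩
    simpa [hrep] using hcode (rep ⟨code x, x, rfl⟩)
  calc coverMincard T univ U n ≤ (Finset.univ.image rep).card := hcover.coverMincard_le_card
    _ ≤ Nat.card (range code) := by
        rw [Nat.card_eq_fintype_card]; exact_mod_cast Finset.card_image_le
    _ ≤ Nat.card Γ := by exact_mod_cast Finite.card_subtype_le (· ∈ range code)

open ExpGrowth in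
lemma Dynamics.coverEntropyEntourage_le_of_eventually_le {Y : Type*} {T : Y → Y} {F : Set Y}
    {U : SetRel Y Y} {M : ℕ → ℕ} {A a : ℝ} (hM : ∀ᶠ n in atTop, coverMincard T F U n ≤ M n)
    (hA : ∀ᶠ n in atTop, (M n : ℝ) ≤ A * Real.exp a ^ n) :
    coverEntropyEntourage T F U ≤ a := by
  have hle : ∀ᶠ n in atTop, (coverMincard T F U n : ENNReal) ≤
      ENNReal.ofReal A * ENNReal.ofReal (Real.exp a) ^ n := by
    filter_upwards [hM, hA] with n hMn hAn
    rw [← ENNReal.ofReal_pow (Real.exp_pos a).le, ← ENNReal.ofReal_mul' (by positivity)]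
    calc (coverMincard T F U n : ENNReal) ≤ (M n : ENNReal) := by exact_mod_cast hMn
      _ = ENNReal.ofReal (M n) := (ENNReal.ofReal_natCast _).symm
      _ ≤ _ := ENNReal.ofReal_le_ofReal hAn
  calc coverEntropyEntourage T F U ≤ expGrowthSup fun n => ENNReal.ofReal (Real.exp a) ^ n :=
        expGrowthSup_le_of_eventually_le ENNReal.ofReal_ne_top hle
    _ = a := by rw [expGrowthSup_pow, ENNReal.log_ofReal_of_pos (Real.exp_pos a), Real.log_exp]

namespace FKPaper

variable {X : Type*} [MetricSpace X] {T : X → X}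

section Matching

variable {δ a ε : ℝ} {m n : ℕ} {x z : X}

lemma exists_strictMono_maxFit (T : X → X) (δ : ℝ) (n : ℕ) (x z : X) :
    ∃ i j : Fin (maxFit T δ n x z) → ℕ, StrictMono i ∧ StrictMono j ∧
      (∀ s, i s < n) ∧ (∀ s, j s < n) ∧ ∀ s, dist (T^[i s] x) (T^[j s] z) < δ :=
  Nat.sSup_mem (s := {k : ℕ | ∃ i j : Fin k → ℕ, StrictMono i ∧ StrictMono j ∧
      (∀ s, i s < n) ∧ (∀ s, j s < n) ∧ ∀ s, dist (T^[i s] x) (T^[j s] z) < δ})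
    ⟨0, Fin.elim0, Fin.elim0, fun s => s.elim0, fun s => s.elim0, fun s => s.elim0,
      fun s => s.elim0, fun s => s.elim0⟩
    ⟨n, fun _ ⟨_, _, hi, _, hin, _⟩ => le_of_injective_of_forall_lt hi.injective hin⟩

lemma maxFit_le (T : X → X) (δ : ℝ) (n : ℕ) (x z : X) : maxFit T δ n x z ≤ n :=
  let ⟨_, _, hi, _, hin, _⟩ := exists_strictMono_maxFit T δ n x z
  le_of_injective_of_forall_lt hi.injective hin

lemma exists_orderEmbedding_of_le_maxFit (hm : m ≤ maxFit T δ n x z) :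
    ∃ i j : Fin m ↪o Fin n, ∀ t, dist (T^[i t] x) (T^[j t] z) < δ := by
  obtain ⟨i, j, hi, hj, hin, hjn, hd⟩ := exists_strictMono_maxFit T δ n x z
  have hcast : StrictMono (Fin.castLE hm) := Fin.strictMono_castLE hm
  exact ⟨.ofStrictMono (fun t => ⟨i (Fin.castLE hm t), hin _⟩) fun s t hst => hi (hcast hst),
    .ofStrictMono (fun t => ⟨j (Fin.castLE hm t), hjn _⟩) fun s t hst => hj (hcast hst),
    fun t => hd _⟩

lemma fbarN_mem_Icc (T : X → X) (δ : ℝ) (n : ℕ) (x z : X) : fbarN T δ n x z ∈ Icc 0 1 := by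
  have h1 : (maxFit T δ n x z : ℝ) / n ≤ 1 :=
    div_le_one_of_le₀ (by exact_mod_cast maxFit_le T δ n x z) n.cast_nonneg
  have h0 : 0 ≤ (maxFit T δ n x z : ℝ) / n := by positivity
  constructor <;> simp only [fbarN] <;> linarith

lemma fbar_le_one (T : X → X) (δ : ℝ) (x z : X) : fbar T δ x z ≤ 1 :=
  limsup_le_of_le (isCoboundedUnder_le_of_le atTop fun n => (fbarN_mem_Icc T δ n x z).1)
    (.of_forall fun n => (fbarN_mem_Icc T δ n x z).2)

-- Since `f̄_δ ≤ 1`, the set defining `ρ_FK` contains every `δ > 1`; in particular its `sInf` is not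
-- the junk value of an empty set.
lemma exists_lt_fbar_lt_of_rhoFK_lt (h : rhoFK T x z < ε) : ∃ δ < ε, fbar T δ x z < δ := by
  have hne : {δ : ℝ | 0 < δ ∧ fbar T δ x z < δ}.Nonempty :=
    ⟨2, two_pos, (fbar_le_one T 2 x z).trans_lt one_lt_two⟩
  obtain ⟨δ, ⟨-, hδ⟩, hδε⟩ := (csInf_lt_iff ⟨0, fun δ hδ => hδ.1.le⟩ hne).1 h
  exact ⟨δ, hδε, hδ⟩

lemma sub_ceil_le_maxFit (h : fbarN T δ n x z < a) : n - ⌈a * n⌉₊ ≤ maxFit T δ n x z := by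
  rcases n.eq_zero_or_pos with rfl | hn
  · simp
  have hn' : (0 : ℝ) < n := by exact_mod_cast hn
  have hlt : (n : ℝ) < maxFit T δ n x z + ⌈a * n⌉₊ := by
    have : 1 - a < (maxFit T δ n x z : ℝ) / n := by simp only [fbarN] at h; linarith
    rw [lt_div_iff₀ hn'] at this
    linarith [Nat.le_ceil (a * n)]
  have : n < maxFit T δ n x z + ⌈a * n⌉₊ := by exact_mod_cast hlt
  omega

-- The inequality is not strict so that `matchSet` is closed, as the Baire argument requires.
def matchSet (T : X → X) (z : X) (b : ℝ) (m n : ℕ) : Set X :=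
  {x | ∃ i j : Fin m ↪o Fin n, ∀ t, dist (T^[i t] x) (T^[j t] z) ≤ b}

lemma isClosed_matchSet (hT : Continuous T) (z : X) (b : ℝ) (m n : ℕ) :
    IsClosed (matchSet T z b m n) := by
  have : matchSet T z b m n = ⋃ (i : Fin m ↪o Fin n) (j : Fin m ↪o Fin n),
      ⋂ t, {x | dist (T^[i t] x) (T^[j t] z) ≤ b} := by
    ext; simp [matchSet]
  rw [this]
  exact isClosed_iUnion_of_finite fun i => isClosed_iUnion_of_finite fun j =>
    isClosed_iInter fun t => isClosed_le ((hT.iterate _).dist continuous_const) continuous_const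

lemma eventually_mem_matchSet_of_rhoFK_lt (h : rhoFK T x z < ε) :
    ∀ᶠ n : ℕ in atTop, x ∈ matchSet T z ε (n - ⌈ε * n⌉₊) n := by
  obtain ⟨δ, hδε, hδ⟩ := exists_lt_fbar_lt_of_rhoFK_lt h
  have hbdd : IsBoundedUnder (· ≤ ·) atTop fun n => fbarN T δ n x z :=
    isBoundedUnder_of ⟨1, fun n => (fbarN_mem_Icc T δ n x z).2⟩
  filter_upwards [eventually_lt_of_limsup_lt (u := fun n => fbarN T δ n x z) (hδ.trans hδε) hbdd]
    with n hn
  obtain ⟨i, j, hij⟩ := exists_orderEmbedding_of_le_maxFit (sub_ceil_le_maxFit hn)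
  exact ⟨i, j, fun t => (hij t).le.trans hδε.le⟩

end Matching

lemma IsMinimal.exists_forall_exists_lt_iterate_mem [CompactSpace X] (hmin : IsMinimal T)
    (hT : Continuous T) {O : Set X} (hO : IsOpen O) (hne : O.Nonempty) :
    ∃ N, ∀ x, ∃ k < N, T^[k] x ∈ O := by
  have hcover : univ ⊆ ⋃ k, T^[k] ⁻¹' O := fun x _ => by
    obtain ⟨_, ⟨k, rfl⟩, hk⟩ := (hmin x).exists_mem_open hO hne
    exact mem_iUnion.2 ⟨k, hk⟩
  obtain ⟨t, ht⟩ := isCompact_univ.elim_finite_subcover _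
    (fun k => hO.preimage (hT.iterate k)) hcover
  refine ⟨t.sup id + 1, fun x => ?_⟩
  obtain ⟨k, hk, hkx⟩ := mem_iUnion₂.1 (ht (mem_univ x))
  exact ⟨k, Nat.lt_succ_of_le (Finset.le_sup (f := id) hk), hkx⟩

section Counting

variable {z x y : X} {ρ b : ℝ} {N m n : ℕ} {S : Finset X}

-- `k` is the time at which `x` enters the set where matches with `z` hold, `(i, j)` such a match
-- of `T^[k] x`, and `u`, `v` net points shadowing the first `N` times and the unmatched times.
def FollowsCode (T : X → X) (z : X) (ρ : ℝ) (k : Fin N) (i j : Fin m ↪o Fin n) (u : Fin N → S)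
    (v : Fin (n - m) → S) (x : X) : Prop :=
  (∀ l : Fin N, dist (T^[l] x) (u l) < ρ) ∧ (∀ t, dist (T^[i t] (T^[k] x)) (T^[j t] z) < ρ) ∧
    ∀ t, dist (T^[finCompl i t] (T^[k] x)) (v t) < ρ

lemma FollowsCode.dist_iterate_lt {k : Fin N} {i j : Fin m ↪o Fin n} {u : Fin N → S}
    {v : Fin (n - m) → S} (hx : FollowsCode T z ρ k i j u v x)
    (hy : FollowsCode T z ρ k i j u v y) {l : ℕ} (hl : l < n) :
    dist (T^[l] x) (T^[l] y) < 2 * ρ := by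
  obtain ⟨w, hxw, hyw⟩ : ∃ w, dist (T^[l] x) w < ρ ∧ dist (T^[l] y) w < ρ := by
    by_cases hlk : l < k
    · exact ⟨u ⟨l, hlk.trans k.2⟩, hx.1 ⟨l, _⟩, hy.1 ⟨l, _⟩⟩
    obtain ⟨p, rfl⟩ : ∃ p, l = p + k := ⟨l - k, by omega⟩
    simp only [Function.iterate_add_apply]
    by_cases hp : (⟨p, by omega⟩ : Fin n) ∈ range i
    · obtain ⟨t, ht⟩ := hp
      exact ⟨T^[j t] z, by simpa [ht] using hx.2.1 t, by simpa [ht] using hy.2.1 t⟩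
    · rw [← mem_compl_iff, ← range_finCompl] at hp
      obtain ⟨t, ht⟩ := hp
      exact ⟨v t, by simpa [ht] using hx.2.2 t, by simpa [ht] using hy.2.2 t⟩
  linarith [dist_triangle_right (T^[l] x) (T^[l] y) w]

lemma exists_followsCode (hS : ∀ x, ∃ s ∈ S, dist x s < ρ) (hb : b < ρ) (k : Fin N)
    (hx : T^[k] x ∈ matchSet T z b m n) :
    ∃ (i j : Fin m ↪o Fin n) (u : Fin N → S) (v : Fin (n - m) → S),
      FollowsCode T z ρ k i j u v x := by
  choose σ hσS hσ using hS
  obtain ⟨i, j, hij⟩ := hx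
  exact ⟨i, j, fun l => ⟨σ (T^[l] x), hσS _⟩, fun t => ⟨σ (T^[finCompl i t] (T^[k] x)), hσS _⟩,
    fun l => hσ _, fun t => (hij t).trans_lt hb, fun t => hσ _⟩

lemma coverMincard_le_of_forall_exists_iterate_mem_matchSet {β : ℝ}
    (hS : ∀ x, ∃ s ∈ S, dist x s < β / 2) (hb : b < β / 2) {r : ℕ} (hr : r ≤ n)
    (hN : ∀ x, ∃ k < N, T^[k] x ∈ matchSet T z b (n - r) n) :
    Dynamics.coverMincard T univ {p | dist p.1 p.2 < β} n ≤
      N * (n.choose r) ^ 2 * S.card ^ (N + r) := by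
  have hcode : ∀ x, ∃ γ : Fin N × (Fin (n - r) ↪o Fin n) × (Fin (n - r) ↪o Fin n) ×
      (Fin N → S) × (Fin (n - (n - r)) → S),
      FollowsCode T z (β / 2) γ.1 γ.2.1 γ.2.2.1 γ.2.2.2.1 γ.2.2.2.2 x := fun x => by
    obtain ⟨k, hk, hkx⟩ := hN x
    obtain ⟨i, j, u, v, h⟩ := exists_followsCode hS hb ⟨k, hk⟩ hkx
    exact ⟨(⟨k, hk⟩, i, j, u, v), h⟩
  refine (Dynamics.coverMincard_univ_le_natCard _ hcode fun γ x y hx hy => ?_).trans ?_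
  · exact Dynamics.mem_dynEntourage.2 fun l hl => by
      simpa using (hx.dist_iterate_lt hy hl).trans_eq (mul_div_cancel₀ β two_ne_zero)
  · simp only [Nat.card_prod, Nat.card_fun, Nat.card_orderEmbedding_fin, Nat.choose_symm hr,
      Nat.sub_sub_self hr, Nat.card_fin, Nat.card_eq_finsetCard]
    exact_mod_cast (by ring : N * (n.choose r * (n.choose r * (S.card ^ N * S.card ^ r))) =
      N * n.choose r ^ 2 * S.card ^ (N + r)).le

end Counting

-- By `Nat.choose_le_exp_one_div_pow`, `C(n, δn)² K^(δn)` is at most a constant times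
-- `exp (n * codeGrowthRate K δ)`.
noncomputable def codeGrowthRate (K δ : ℝ) : ℝ :=
  δ * (2 * (1 - Real.log δ) + Real.log K)

lemma continuous_codeGrowthRate (K : ℝ) : Continuous (codeGrowthRate K) := by
  have : codeGrowthRate K = fun δ => 2 * δ - 2 * (δ * Real.log δ) + δ * Real.log K := by
    ext δ; simp only [codeGrowthRate]; ring
  rw [this]
  fun_prop (disch := exact Real.continuous_mul_log)

lemma exists_codeGrowthRate_lt (K : ℝ) {h : EReal} (hh : 0 < h) {c : ℝ} (hc : 0 < c) :
    ∃ δ ∈ Ioo 0 c, (codeGrowthRate K δ : EReal) < h := by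
  have hlim : Tendsto (fun δ => (codeGrowthRate K δ : EReal)) (𝓝 0) (𝓝 0) := by
    simpa [codeGrowthRate] using
      (EReal.continuous_coe_iff.2 (continuous_codeGrowthRate K)).tendsto 0
  exact ((eventually_mem_set.2 (Ioo_mem_nhdsGT hc)).and
    ((hlim.eventually_lt_const hh).filter_mono nhdsWithin_le_nhds)).exists

lemma natCast_mul_choose_sq_mul_pow_le {δ K : ℝ} (hδ : 0 < δ) (hδ1 : δ ≤ 1) (hK : 1 ≤ K)
    (N : ℕ) {n r : ℕ} (hr : δ * n ≤ r) (hr' : r ≤ δ * n + 1) :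
    N * (n.choose r : ℝ) ^ 2 * K ^ (N + r) ≤
      N * K ^ N * Real.exp (2 * (1 - Real.log δ) + Real.log K) *
        Real.exp (codeGrowthRate K δ) ^ n := by
  set L := 2 * (1 - Real.log δ) + Real.log K
  have hL : 0 ≤ L := by
    have := Real.log_nonpos hδ.le hδ1
    have := Real.log_nonneg hK
    simp only [L]; linarith
  have hchoose : (n.choose r : ℝ) ^ 2 * K ^ r ≤ Real.exp (r * L) := by
    have he : Real.exp 1 / δ = Real.exp (1 - Real.log δ) := by
      rw [Real.exp_sub, Real.exp_log hδ]
    calc (n.choose r : ℝ) ^ 2 * K ^ r ≤ ((Real.exp 1 / δ) ^ r) ^ 2 * K ^ r := by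
          gcongr; exact Nat.choose_le_exp_one_div_pow hδ hr
      _ = Real.exp (r * L) := by
          rw [he, ← Real.exp_log (by positivity : (0 : ℝ) < K), ← Real.exp_nat_mul,
            ← Real.exp_nat_mul, ← Real.exp_nat_mul, ← Real.exp_add]
          congr 1
          simp only [L]
          push_cast
          ring
  have hexp : Real.exp (r * L) ≤ Real.exp L * Real.exp (codeGrowthRate K δ) ^ n := by
    rw [← Real.exp_nat_mul, ← Real.exp_add, codeGrowthRate]
    gcongr
    nlinarith
  calc N * (n.choose r : ℝ) ^ 2 * K ^ (N + r) = N * K ^ N * ((n.choose r : ℝ) ^ 2 * K ^ r) := by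
        ring
    _ ≤ N * K ^ N * (Real.exp L * Real.exp (codeGrowthRate K δ) ^ n) :=
        mul_le_mul_of_nonneg_left (hchoose.trans hexp) (by positivity)
    _ = _ := by ring

lemma coverEntropyEntourage_le_codeGrowthRate [Nonempty X] {z : X} {β b δ : ℝ} {N : ℕ}
    {S : Finset X} (hS : ∀ x, ∃ s ∈ S, dist x s < β / 2) (hb : b < β / 2) (hδ : 0 < δ)
    (hδ1 : δ ≤ 1)
    (hN : ∀ᶠ n : ℕ in atTop, ∀ x, ∃ k < N, T^[k] x ∈ matchSet T z b (n - ⌈δ * n⌉₊) n) :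
    Dynamics.coverEntropyEntourage T univ {p | dist p.1 p.2 < β} ≤ codeGrowthRate S.card δ := by
  have hK : (1 : ℝ) ≤ S.card := by
    obtain ⟨s, hs, -⟩ := hS (Classical.arbitrary X)
    exact_mod_cast Finset.card_pos.2 ⟨s, hs⟩
  apply Dynamics.coverEntropyEntourage_le_of_eventually_le
    (M := fun n => N * (n.choose ⌈δ * n⌉₊) ^ 2 * S.card ^ (N + ⌈δ * n⌉₊))
  · filter_upwards [hN] with n hn
    refine coverMincard_le_of_forall_exists_iterate_mem_matchSet hS hb ?_ hn
    exact Nat.ceil_le.2 (mul_le_of_le_one_left n.cast_nonneg hδ1)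
  · refine .of_forall fun n => ?_
    push_cast
    exact natCast_mul_choose_sq_mul_pow_le hδ hδ1 hK N (Nat.le_ceil _)
      (Nat.ceil_lt_add_one (by positivity)).le

end FKPaper

/-- every minimal TDS with positive topological entropy is FK-sensitive. -/
theorem fkSensitive_of_minimal_posEntropy {X : Type*} [MetricSpace X] [CompactSpace X] [Nonempty X]
    (T : X → X) (hT : Continuous T)
    (hmin : IsMinimal T) (hent : 0 < Dynamics.coverEntropy T Set.univ) :
    FKSensitive T := by
  by_contra hFK
  simp only [FKSensitive, not_exists, not_and, not_forall, not_lt] at hFK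
  obtain ⟨β, hβ, hpos⟩ : ∃ β > 0, 0 < Dynamics.coverEntropyEntourage T univ
      {p | dist p.1 p.2 < β} := by
    simpa [Dynamics.coverEntropy_eq_iSup_basis Metric.uniformity_basis_dist, lt_iSup_iff]
      using hent
  obtain ⟨S, -, hS⟩ := (isCompact_univ (X := X)).elim_nhds_subcover (fun x => Metric.ball x (β / 2))
    fun x _ => Metric.ball_mem_nhds x (half_pos hβ)
  obtain ⟨δ, ⟨hδ, hδβ⟩, hδh⟩ :=
    exists_codeGrowthRate_lt S.card hpos (lt_min one_pos (half_pos hβ))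
  obtain ⟨U, hU, ⟨z, hz⟩, hUz⟩ := hFK (δ / 2) (half_pos hδ)
  have hmatch : ∀ x ∈ U, ∀ᶠ n : ℕ in atTop, x ∈ matchSet T z δ (n - ⌈δ * n⌉₊) n := fun x hx =>
    eventually_mem_matchSet_of_rhoFK_lt ((hUz x hx z hz).trans_lt (half_lt_self hδ))
  obtain ⟨O, hO, hOne, hOsub⟩ :=
    hU.exists_isOpen_eventually_subset ⟨z, hz⟩ (fun n => isClosed_matchSet hT z δ _ n) hmatch
  obtain ⟨N, hN⟩ := hmin.exists_forall_exists_lt_iterate_mem hT hO hOne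
  have hle := coverEntropyEntourage_le_codeGrowthRate (N := N)
    (fun x => by simpa using hS (mem_univ x)) (hδβ.trans_le (min_le_right _ _)) hδ
    (hδβ.le.trans (min_le_left _ _))
    (hOsub.mono fun n hn x => let ⟨k, hk, hkO⟩ := hN x; ⟨k, hk, hn hkO⟩)
  exact lt_irrefl _ (hδh.trans_le hle)
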